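/- arXiv:1909.11054 — 3 statements merged into one kernel-verified Lean document; each statement's English description precedes it below -/
import Mathlib

section
/- Let Q be an N×N real matrix, S a p×N real matrix, and v ∈ ℝ^N a nonzero vector such that S Q^k v = 0 for all k ∈ ℕ. Then for every k ∈ ℕ, S Q^k = S (Q + v vᵀ)^k. -/
open Matrix

lemma aux {p N : ℕ} (M : Matrix (Fin p) (Fin N) ℝ) (v : Fin N → ℝ)
    (h : M *ᵥ v = 0) : M * Matrix.vecMulVec v v = 0 := by
  ext i j
  simp only [Matrix.mul_apply, Matrix.vecMulVec_apply, Matrix.zero_apply]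
  have := congrFun h i
  simp only [Matrix.mulVec, dotProduct, Pi.zero_apply] at this
  calc ∑ k, M i k * (v k * v j) = (∑ k, M i k * v k) * v j := by
        rw [Finset.sum_mul]; congr 1; ext k; ring
    _ = 0 := by rw [this]; ring

theorem stmt3 {N p : ℕ} (Q : Matrix (Fin N) (Fin N) ℝ)
    (S : Matrix (Fin p) (Fin N) ℝ) (v : Fin N → ℝ) (hv : v ≠ 0)
    (h : ∀ k : ℕ, (S * Q ^ k) *ᵥ v = 0) :
    ∀ k : ℕ, S * Q ^ k = S * (Q + Matrix.vecMulVec v v) ^ k := by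
  intro k
  induction k with
  | zero => simp
  | succ n ih =>
    rw [pow_succ, pow_succ, ← Matrix.mul_assoc, ← Matrix.mul_assoc, ← ih, Matrix.mul_add,
      aux (S * Q ^ n) v (h n), add_zero]
end

section
/- Let A, B, C, Q, Q̄ be real matrices of compatible dimensions, let n be the dimension of A, and suppose that C(A+BQC)^ℓ B R = C(A+BQ̄C)^ℓ B R for all ℓ with 0 ≤ ℓ ≤ 2n−1. Then C(A+BQC)^ℓ B R = C(A+BQ̄C)^ℓ B R for all ℓ ∈ ℕ. -/
/-!
Stacking the two closed loops into the block-diagonal system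
`(fromCols C (-C), fromBlocks (A + BQC) 0 0 (A + BQ̄C), fromRows (BR) (BR))` turns the
difference of their Markov parameters into the Markov parameters of a single system of
dimension `2n`. By Cayley–Hamilton every power of its state matrix is a combination of the
powers below `2n`, so those Markov parameters vanish as soon as the first `2n` do.
-/

open Polynomial

namespace Matrix

variable {R : Type*} [CommRing R] {ι ι' κ κ' : Type*}
  [Fintype ι] [DecidableEq ι] [Fintype ι'] [DecidableEq ι']

theorem exists_pow_eq_sum_pow_lt_card [Nontrivial R] (M : Matrix ι ι R) (k : ℕ) :
    ∃ c : ℕ → R, M ^ k = ∑ i ∈ Finset.range (Fintype.card ι), c i • M ^ i := by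
  refine ⟨(X ^ k %ₘ M.charpoly).coeff, ?_⟩
  rcases isEmpty_or_nonempty ι with _ | _
  · exact Subsingleton.elim _ _
  have hcharpoly : M.charpoly.natDegree = Fintype.card ι := M.charpoly_natDegree_eq_dim
  have hlt : (X ^ k %ₘ M.charpoly).natDegree < Fintype.card ι := by
    rw [← hcharpoly]
    refine natDegree_modByMonic_lt _ M.charpoly_monic fun h1 => ?_
    simp only [h1, natDegree_one] at hcharpoly
    exact Fintype.card_ne_zero hcharpoly.symm
  rw [pow_eq_aeval_mod_charpoly, aeval_eq_sum_range' hlt]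

theorem mul_pow_mul_eq_zero_of_forall_lt_card [Nontrivial R] (M : Matrix ι ι R)
    {C : Matrix κ ι R} {B : Matrix ι κ' R}
    (h : ∀ i < Fintype.card ι, C * M ^ i * B = 0) (k : ℕ) : C * M ^ k * B = 0 := by
  obtain ⟨c, hc⟩ := M.exists_pow_eq_sum_pow_lt_card k
  rw [hc, Matrix.mul_sum, Matrix.sum_mul]
  refine Finset.sum_eq_zero fun i hi => ?_
  rw [Matrix.mul_smul, Matrix.smul_mul, h i (Finset.mem_range.1 hi), smul_zero]

theorem fromCols_mul_fromBlocks_pow_mul_fromRows [Fintype κ] [Fintype κ'] (M : Matrix ι ι R)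
    (N : Matrix ι' ι' R) (C₁ : Matrix κ ι R) (C₂ : Matrix κ ι' R) (B₁ : Matrix ι κ' R)
    (B₂ : Matrix ι' κ' R) (k : ℕ) :
    fromCols C₁ C₂ * fromBlocks M 0 0 N ^ k * fromRows B₁ B₂ =
      C₁ * M ^ k * B₁ + C₂ * N ^ k * B₂ := by
  rw [fromBlocks_diagonal_pow, fromCols_mul_fromBlocks, fromCols_mul_fromRows]
  simp

theorem mul_pow_mul_eq_of_forall_lt_card_add_card [Nontrivial R] [Fintype κ] [Fintype κ']
    (M : Matrix ι ι R) (N : Matrix ι' ι' R) (C₁ : Matrix κ ι R) (C₂ : Matrix κ ι' R)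
    (B₁ : Matrix ι κ' R) (B₂ : Matrix ι' κ' R)
    (h : ∀ i < Fintype.card ι + Fintype.card ι', C₁ * M ^ i * B₁ = C₂ * N ^ i * B₂)
    (k : ℕ) : C₁ * M ^ k * B₁ = C₂ * N ^ k * B₂ := by
  have hdiff (i : ℕ) : fromCols C₁ (-C₂) * fromBlocks M 0 0 N ^ i * fromRows B₁ B₂ =
      C₁ * M ^ i * B₁ - C₂ * N ^ i * B₂ := by
    rw [fromCols_mul_fromBlocks_pow_mul_fromRows, Matrix.neg_mul, Matrix.neg_mul,
      ← sub_eq_add_neg]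
  have hzero := mul_pow_mul_eq_zero_of_forall_lt_card (fromBlocks M 0 0 N)
    (C := fromCols C₁ (-C₂)) (B := fromRows B₁ B₂) fun i hi => by
      rw [hdiff, sub_eq_zero]
      exact h i (by rwa [Fintype.card_sum] at hi)
  rw [← sub_eq_zero, ← hdiff, hzero]

end Matrix

theorem stmt5 {n m p q : ℕ}
    (A : Matrix (Fin n) (Fin n) ℝ) (B : Matrix (Fin n) (Fin m) ℝ)
    (C : Matrix (Fin p) (Fin n) ℝ) (Q Qbar : Matrix (Fin m) (Fin p) ℝ)
    (R : Matrix (Fin m) (Fin q) ℝ)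
    (h : ∀ ℓ : ℕ, ℓ < 2 * n →
      C * (A + B * Q * C) ^ ℓ * B * R = C * (A + B * Qbar * C) ^ ℓ * B * R) :
    ∀ ℓ : ℕ,
      C * (A + B * Q * C) ^ ℓ * B * R = C * (A + B * Qbar * C) ^ ℓ * B * R := by
  simp_rw [Matrix.mul_assoc _ B R] at h ⊢
  refine Matrix.mul_pow_mul_eq_of_forall_lt_card_add_card _ _ C C (B * R) (B * R)
    fun ℓ hℓ => h ℓ ?_
  simpa [two_mul] using hℓ
end

section
/- Let A, B, C, Q, R be real matrices of compatible dimensions, with M_ℓ(Q) := C(A+BQC)^ℓ B R. Suppose Q̄ is a matrix such that for all ℓ with 1 ≤ ℓ ≤ r: ∑_{i=0}^{ℓ-1} C A^i B Q M_{ℓ-i-1}(Q) = ∑_{i=0}^{ℓ-1} C A^i B Q̄ M_{ℓ-i-1}(Q). Then M_k(Q) = M_k(Q̄) for all k with 0 ≤ k ≤ r. -/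
open Matrix

lemma pow_add_expand {n : ℕ} (A D : Matrix (Fin n) (Fin n) ℝ) (ℓ : ℕ) :
    (A + D) ^ ℓ = A ^ ℓ + ∑ i ∈ Finset.range ℓ, A ^ i * D * (A + D) ^ (ℓ - i - 1) := by
  induction ℓ with
  | zero => simp
  | succ ℓ ih =>
    have step : (A + D) ^ (ℓ + 1) = A * (A + D) ^ ℓ + D * (A + D) ^ ℓ := by
      rw [pow_succ', add_mul]
    nth_rewrite 1 [ih] at step
    rw [step, mul_add, Finset.mul_sum]
    rw [Finset.sum_range_succ']
    have e1 : ∀ i, ℓ + 1 - (i + 1) - 1 = ℓ - i - 1 := by intro i; omega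
    have e2 : ℓ + 1 - 0 - 1 = ℓ := by omega
    simp only [e1, e2, pow_zero, one_mul]
    have hterm : ∀ i ∈ Finset.range ℓ,
        A ^ (i + 1) * D * (A + D) ^ (ℓ - i - 1) = A * (A ^ i * D * (A + D) ^ (ℓ - i - 1)) := by
      intro i _
      rw [pow_succ']
      simp [mul_assoc]
    rw [Finset.sum_congr rfl hterm, pow_succ']
    abel

theorem stmt6 {n m p q : ℕ}
    (A : Matrix (Fin n) (Fin n) ℝ) (B : Matrix (Fin n) (Fin m) ℝ)
    (C : Matrix (Fin p) (Fin n) ℝ) (Q Qbar : Matrix (Fin m) (Fin p) ℝ)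
    (R : Matrix (Fin m) (Fin q) ℝ) (r : ℕ)
    (M : Matrix (Fin m) (Fin p) ℝ → ℕ → Matrix (Fin p) (Fin q) ℝ)
    (hM : ∀ X ℓ, M X ℓ = C * (A + B * X * C) ^ ℓ * B * R)
    (h : ∀ ℓ : ℕ, 1 ≤ ℓ → ℓ ≤ r →
      ∑ i ∈ Finset.range ℓ, C * A ^ i * B * Q * M Q (ℓ - i - 1) =
      ∑ i ∈ Finset.range ℓ, C * A ^ i * B * Qbar * M Q (ℓ - i - 1)) :
    ∀ k : ℕ, k ≤ r → M Q k = M Qbar k := by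
  -- Markov recursion
  have markov : ∀ X ℓ, M X ℓ =
      C * A ^ ℓ * B * R + ∑ i ∈ Finset.range ℓ, C * A ^ i * B * X * M X (ℓ - i - 1) := by
    intro X ℓ
    rw [hM X ℓ, pow_add_expand]
    simp only [Matrix.mul_add, Matrix.add_mul, Matrix.mul_sum, Matrix.sum_mul]
    congr 1
    apply Finset.sum_congr rfl
    intro i _
    rw [hM X (ℓ - i - 1)]
    simp [Matrix.mul_assoc]
  intro k hk
  induction k using Nat.strong_induction_on with
  | _ k ih =>
    rcases Nat.eq_zero_or_pos k with h0 | h1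
    · subst h0; simp [hM]
    · have hsum : ∑ i ∈ Finset.range k, C * A ^ i * B * Qbar * M Qbar (k - i - 1) =
          ∑ i ∈ Finset.range k, C * A ^ i * B * Qbar * M Q (k - i - 1) := by
        apply Finset.sum_congr rfl
        intro i hi
        rw [ih (k - i - 1) (by omega) (by omega)]
      rw [markov Q k, markov Qbar k, hsum, h k h1 hk]
end
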